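/- For every integer n, the square of the bicomplex Pell number satisfies BP(n)² = 4·P(2n+3)·1 − 4·P(2n+3)·i + 2·(P(2n+1) − 6·P(n+1)²)·j + 2·(6·P(n)·P(n+1) + 2·P(2n+1))·ij. -/

import Mathlib

/-
The product `ij` is `i * j` with `i² = j² = -1`, so squaring `x + a i + b j + c ij` is a polynomial
identity in `i, j`. Its coefficients reduce, via `P (n + 2) = 2 P (n + 1) + P n`, to the doubling
formula `P (2m + 1) = P m ^ 2 + P (m + 1) ^ 2`. That is the case `m = n` of the addition formula
`P (m + n + 1) = P (m + 1) P (n + 1) + P m P n`, which holds because both sides satisfy the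
recurrence in `m` and agree at `m = 0, 1`.
-/

open scoped TensorProduct

noncomputable def bi : ℂ ⊗[ℝ] ℂ := Complex.I ⊗ₜ[ℝ] 1
noncomputable def bj : ℂ ⊗[ℝ] ℂ := (1 : ℂ) ⊗ₜ[ℝ] Complex.I
noncomputable def bij : ℂ ⊗[ℝ] ℂ := Complex.I ⊗ₜ[ℝ] Complex.I

/-- The bicomplex Pell number `BP n = P n + P (n+1) i + P (n+2) j + P (n+3) ij`. -/
noncomputable def BP (P : ℤ → ℤ) (n : ℤ) : ℂ ⊗[ℝ] ℂ :=
  (P n : ℝ) • (1 : ℂ ⊗[ℝ] ℂ) + (P (n + 1) : ℝ) • bi + (P (n + 2) : ℝ) • bj +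
    (P (n + 3) : ℝ) • bij

section Recurrence

variable {R : Type*} [CommRing R] (a : R)

theorem eq_of_recurrence {f g : ℤ → R} (hf : ∀ n, f (n + 2) = a * f (n + 1) + f n)
    (hg : ∀ n, g (n + 2) = a * g (n + 1) + g n) (h0 : f 0 = g 0) (h1 : f 1 = g 1) :
    f = g := by
  suffices h : ∀ n, f n = g n ∧ f (n + 1) = g (n + 1) from funext fun n ↦ (h n).1
  intro n
  induction n using Int.induction_on with
  | zero => exact ⟨h0, h1⟩
  | succ k ih =>
    refine ⟨ih.2, ?_⟩
    rw [add_assoc, one_add_one_eq_two, hf, hg, ih.1, ih.2]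
  | pred k ih =>
    refine ⟨?_, by rw [sub_add_cancel]; exact ih.1⟩
    have hfk := hf (-k - 1)
    have hgk := hg (-k - 1)
    rw [show -(k : ℤ) - 1 + 2 = -k + 1 by ring, sub_add_cancel] at hfk hgk
    linear_combination ih.2 - a * ih.1 - hfk + hgk

theorem add_add_one_of_recurrence {f : ℤ → R} (hf : ∀ n, f (n + 2) = a * f (n + 1) + f n)
    (h0 : f 0 = 0) (h1 : f 1 = 1) (m n : ℤ) :
    f (m + n + 1) = f (m + 1) * f (n + 1) + f m * f n := by
  have h := eq_of_recurrence a (f := fun m ↦ f (m + n + 1))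
    (g := fun m ↦ f (m + 1) * f (n + 1) + f m * f n)
    (fun m ↦ by rw [show m + 2 + n + 1 = m + n + 1 + 2 by ring, hf]; ring_nf)
    (fun m ↦ by rw [show m + 2 + 1 = m + 1 + 2 by ring, hf, hf]; ring)
    (by simp [h0, h1])
    (by
      rw [show 1 + n + 1 = n + 2 by ring, hf, show (1 : ℤ) + 1 = 0 + 2 by rfl, hf]
      simp [h0, h1, add_comm])
  exact congrFun h m

end Recurrence

theorem sq_smul_one_add_smul_add_smul_add_smul_mul {R A : Type*} [CommRing R] [CommRing A]
    [Algebra R A] {i j : A} (hi : i * i = -1) (hj : j * j = -1) (x a b c : R) :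
    (x • (1 : A) + a • i + b • j + c • (i * j)) ^ 2 =
      (x ^ 2 - a ^ 2 - b ^ 2 + c ^ 2) • (1 : A) + (2 * x * a - 2 * b * c) • i +
        (2 * x * b - 2 * a * c) • j + (2 * x * c + 2 * a * b) • (i * j) := by
  simp only [Algebra.smul_def, map_add, map_sub, map_mul, map_pow, map_ofNat, mul_one]
  generalize algebraMap R A a = a, algebraMap R A b = b, algebraMap R A c = c
  linear_combination
    (a ^ 2 + c ^ 2 * j ^ 2 + 2 * a * c * j) * hi + (b ^ 2 - c ^ 2 + 2 * b * c * i) * hj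

theorem bi_mul_bi : bi * bi = -1 := by
  rw [bi, Algebra.TensorProduct.tmul_mul_tmul, Complex.I_mul_I, mul_one, TensorProduct.neg_tmul]
  rfl

theorem bj_mul_bj : bj * bj = -1 := by
  rw [bj, Algebra.TensorProduct.tmul_mul_tmul, Complex.I_mul_I, mul_one, TensorProduct.tmul_neg]
  rfl

theorem bi_mul_bj : bi * bj = bij := by
  rw [bi, bj, bij, Algebra.TensorProduct.tmul_mul_tmul, mul_one, one_mul]

theorem bicomplexPell_sq (P : ℤ → ℤ)
    (hP : ∀ n : ℤ, P (n + 2) = 2 * P (n + 1) + P n) (hP0 : P 0 = 0) (hP1 : P 1 = 1)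
    (n : ℤ) :
    BP P n ^ 2 =
      (4 * (P (2 * n + 3) : ℝ)) • (1 : ℂ ⊗[ℝ] ℂ) - (4 * (P (2 * n + 3) : ℝ)) • bi +
        (2 * ((P (2 * n + 1) : ℝ) - 6 * (P (n + 1) : ℝ) ^ 2)) • bj +
        (2 * (6 * (P n : ℝ) * (P (n + 1) : ℝ) + 2 * (P (2 * n + 1) : ℝ))) • bij := by
  have hodd (m : ℤ) : P (2 * m + 1) = P m ^ 2 + P (m + 1) ^ 2 := by
    rw [two_mul, add_add_one_of_recurrence 2 hP hP0 hP1]; ring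
  have hodd' := hodd (n + 1)
  have h2 := hP n
  have h3 := hP (n + 1)
  rw [show 2 * (n + 1) + 1 = 2 * n + 3 by ring, show n + 1 + 1 = n + 2 by ring] at hodd'
  rw [show n + 1 + 2 = n + 3 by ring, show n + 1 + 1 = n + 2 by ring] at h3
  rw [BP, ← bi_mul_bj, sq_smul_one_add_smul_add_smul_add_smul_mul bi_mul_bi bj_mul_bj]
  push_cast [hodd n, hodd', h3, h2]
  module
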